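/- Let φ : (G′,g′) → (G,g) be a finite harmonic morphism of connected weighted graphs. Then χ(G′) = deg(φ)·χ(G) − Ram(φ), where Ram(φ) = Σ_{v′∈V(G′)} Ram_φ(v′) (the global Riemann–Hurwitz formula). In particular, if φ is unramified then χ(G′) = deg(φ)·χ(G). -/

import Mathlib

namespace TropDR

open Finset

/-- `Finset.filter` with classical decidability. -/
noncomputable def cfilter {α : Type*} (p : α → Prop) (s : Finset α) : Finset α :=
  @Finset.filter α p (Classical.decPred p) s

/-- A graph with legs: a finite set `X` together with an idempotent root map `rt`
and an involution `inv` fixing every root vertex. -/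
structure PGraph where
  X : Type
  [fintypeX : Fintype X]
  [decEqX : DecidableEq X]
  rt : X → X
  inv : X → X
  rt_idem : ∀ x, rt (rt x) = rt x
  inv_invol : ∀ x, inv (inv x) = x
  inv_fix_rt : ∀ x, inv (rt x) = rt x

attribute [instance] PGraph.fintypeX PGraph.decEqX

namespace PGraph

variable (G : PGraph)

/-- Vertices are the fixed points (= the image) of the root map. -/
def IsVertex (x : G.X) : Prop := G.rt x = x

/-- Half-edges are the non-vertices. -/
def IsHalf (x : G.X) : Prop := G.rt x ≠ x

/-- Legs are the `inv`-fixed half-edges. -/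
def IsLeg (x : G.X) : Prop := G.IsHalf x ∧ G.inv x = x

/-- Halves of genuine edges: half-edges moved by the involution. -/
def IsEdgeHalf (x : G.X) : Prop := G.IsHalf x ∧ G.inv x ≠ x

noncomputable def vertexSet : Finset G.X := cfilter (fun x => G.IsVertex x) Finset.univ

noncomputable def legSet : Finset G.X := cfilter (fun x => G.IsLeg x) Finset.univ

noncomputable def edgeHalfSet : Finset G.X := cfilter (fun x => G.IsEdgeHalf x) Finset.univ

/-- Tangent directions at a vertex `v`: half-edges rooted at `v`. -/
noncomputable def tangents (v : G.X) : Finset G.X :=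
  cfilter (fun h => G.IsHalf h ∧ G.rt h = v) Finset.univ

noncomputable def valence (v : G.X) : ℕ := (G.tangents v).card

/-- The number of edges: half the number of edge half-edges. -/
noncomputable def numEdges : ℕ := G.edgeHalfSet.card / 2

noncomputable def numLegs : ℕ := G.legSet.card

noncomputable def numVertices : ℕ := G.vertexSet.card

/-- Connectedness: the equivalence relation generated by `x ∼ rt x` and `x ∼ inv x`
has a single class (and `X` is nonempty). -/
def Connected : Prop :=
  Nonempty G.X ∧ ∀ x y : G.X, Relation.EqvGen (fun a b => G.rt a = b ∨ G.inv a = b) x y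

/-- A subgraph: a subset of `X` closed under the root map and the involution. -/
def IsSubgraph (F : Finset G.X) : Prop :=
  (∀ x ∈ F, G.rt x ∈ F) ∧ (∀ x ∈ F, G.inv x ∈ F)

/-- Valency of `v` inside a subgraph `F`. -/
noncomputable def valIn (F : Finset G.X) (v : G.X) : ℕ := (G.tangents v ∩ F).card

end PGraph

/-- A morphism of graphs: commutes with the root maps and involutions,
and maps no edge into a leg. -/
structure GraphHom (G' G : PGraph) where
  toFun : G'.X → G.X
  map_rt : ∀ x, toFun (G'.rt x) = G.rt (toFun x)
  map_inv : ∀ x, toFun (G'.inv x) = G.inv (toFun x)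
  edge_not_leg : ∀ h, G'.IsEdgeHalf h → ¬ G.IsLeg (toFun h)

/-- A harmonic morphism of graphs: a graph morphism together with a degree function. -/
structure HarmonicHom (G' G : PGraph) extends GraphHom G' G where
  deg : G'.X → ℕ
  deg_edge : ∀ h, G'.IsEdgeHalf h → deg (G'.inv h) = deg h
  deg_zero_iff : ∀ h, G'.IsHalf h → (deg h = 0 ↔ G.IsVertex (toFun h))
  harmonic : ∀ v', G'.IsVertex v' → ∀ h, G.IsHalf h → G.rt h = toFun v' →
    deg v' = ∑ h' ∈ cfilter (fun h' => toFun h' = h) (G'.tangents v'), deg h'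

namespace HarmonicHom

variable {G' G : PGraph} (φ : HarmonicHom G' G)

/-- A harmonic morphism is finite if it has positive degree on every half-edge. -/
def Finite : Prop := ∀ h, G'.IsHalf h → 0 < φ.deg h

/-- The sum of the degrees over the vertex fiber of `v`. -/
noncomputable def vertexFiberDeg (v : G.X) : ℕ :=
  ∑ v' ∈ cfilter (fun v' => φ.toFun v' = v) G'.vertexSet, φ.deg v'

end HarmonicHom

/-- A weighted graph: a graph together with a genus function on (all elements;
only the values at vertices are relevant). -/
structure WGraph extends PGraph where
  gw : X → ℕ

namespace WGraph

variable (G : WGraph)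

/-- The genus of a (connected) weighted graph. -/
noncomputable def genus : ℤ :=
  (G.toPGraph.numEdges : ℤ) - (G.toPGraph.numVertices : ℤ) + 1 +
    ∑ v ∈ G.toPGraph.vertexSet, (G.gw v : ℤ)

/-- The Euler characteristic of a vertex. -/
noncomputable def chiV (v : G.X) : ℤ :=
  2 - 2 * (G.gw v : ℤ) - (G.toPGraph.valence v : ℤ)

/-- The Euler characteristic of a (connected) weighted graph. -/
noncomputable def chi : ℤ := 2 - 2 * G.genus - (G.toPGraph.numLegs : ℤ)

end WGraph

/-- The ramification degree of a (finite) harmonic morphism of weighted graphs at `v'`. -/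
noncomputable def ram {G' G : WGraph} (φ : HarmonicHom G'.toPGraph G.toPGraph) (v' : G'.X) : ℤ :=
  (φ.deg v' : ℤ) * G.chiV (φ.toFun v') - G'.chiV v'

def Unramified {G' G : WGraph} (φ : HarmonicHom G'.toPGraph G.toPGraph) : Prop :=
  ∀ v', G'.toPGraph.IsVertex v' → ram φ v' = 0

def Effective {G' G : WGraph} (φ : HarmonicHom G'.toPGraph G.toPGraph) : Prop :=
  ∀ v', G'.toPGraph.IsVertex v' → 0 ≤ ram φ v'

/-!
Both sides are sums over vertices. By the handshake lemma (each half-edge has exactly one root,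
and edge half-edges pair up under the involution), `χ(G) = Σ_{v ∈ V(G)} χ(v)`. Summing
`Ram_φ(v') = d_φ(v')·χ(φ(v')) − χ(v')` over `V(G')` and grouping the first term along the fibres
of `φ`, each fibre contributes `deg(φ)·χ(v)`.
-/

lemma cfilter_eq_filter {α : Type*} (p : α → Prop) [DecidablePred p] (s : Finset α) :
    cfilter p s = s.filter p := by
  unfold cfilter
  congr

lemma mem_cfilter {α : Type*} {p : α → Prop} {s : Finset α} {x : α} :
    x ∈ cfilter p s ↔ x ∈ s ∧ p x := by
  classical
  rw [cfilter_eq_filter, mem_filter]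

lemma even_card_of_involution {α : Type*} {s : Finset α} (f : α → α)
    (hf : Function.Involutive f) (hmem : ∀ a ∈ s, f a ∈ s) (hfix : ∀ a ∈ s, f a ≠ a) :
    Even #s := by
  have hsum : ∑ _a ∈ s, (1 : ZMod 2) = 0 :=
    sum_involution (fun a _ => f a) (fun _ _ => by decide) (fun a ha _ => hfix a ha)
      (fun a ha => hmem a ha) (fun a _ => hf a)
  rw [sum_const, nsmul_eq_mul, mul_one, ZMod.natCast_eq_zero_iff] at hsum
  exact even_iff_two_dvd.mpr hsum

namespace PGraph

variable (G : PGraph)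

lemma mem_vertexSet {x : G.X} : x ∈ G.vertexSet ↔ G.IsVertex x := by
  simp [vertexSet, mem_cfilter]

lemma isVertex_rt (x : G.X) : G.IsVertex (G.rt x) := G.rt_idem x

variable {G} in
lemma IsEdgeHalf.inv {x : G.X} (hx : G.IsEdgeHalf x) : G.IsEdgeHalf (G.inv x) := by
  refine ⟨fun hv => hx.2 ?_, fun h => hx.2 (by rw [← h, G.inv_invol])⟩
  calc G.inv x = G.inv (G.rt (G.inv x)) := by rw [G.inv_fix_rt, hv]
    _ = x := by rw [hv, G.inv_invol]

lemma two_mul_numEdges : 2 * G.numEdges = #G.edgeHalfSet := by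
  refine Nat.mul_div_cancel' (even_iff_two_dvd.mp ?_)
  refine even_card_of_involution G.inv G.inv_invol (fun a ha => ?_) (fun a ha => ?_)
  · simp only [edgeHalfSet, mem_cfilter, mem_univ, true_and] at ha ⊢
    exact ha.inv
  · exact ((mem_cfilter.mp ha).2).2

lemma card_edgeHalfSet_add_card_legSet :
    #G.edgeHalfSet + #G.legSet = #(cfilter G.IsHalf univ) := by
  rw [← card_union_of_disjoint]
  · congr 1
    ext x
    simp only [mem_union, edgeHalfSet, legSet, mem_cfilter, IsEdgeHalf, IsLeg]
    tauto
  · exact disjoint_left.mpr fun a ha hb => (mem_cfilter.mp ha).2.2 (mem_cfilter.mp hb).2.2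

lemma sum_valence : ∑ v ∈ G.vertexSet, G.valence v = #G.edgeHalfSet + #G.legSet := by
  classical
  rw [card_edgeHalfSet_add_card_legSet,
    card_eq_sum_card_fiberwise (fun x _ => G.mem_vertexSet.mpr (G.isVertex_rt x))]
  refine sum_congr rfl fun v _ => ?_
  simp only [valence, tangents, cfilter_eq_filter, filter_filter]

end PGraph

lemma WGraph.chi_eq_sum_chiV (G : WGraph) : G.chi = ∑ v ∈ G.vertexSet, G.chiV v := by
  have hval : (∑ v ∈ G.vertexSet, (G.valence v : ℤ)) = #G.edgeHalfSet + #G.legSet := by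
    exact_mod_cast G.sum_valence
  have hedges : (#G.edgeHalfSet : ℤ) = 2 * G.numEdges := by
    exact_mod_cast G.two_mul_numEdges.symm
  simp only [WGraph.chiV, sum_sub_distrib, sum_const, ← mul_sum, nsmul_eq_mul]
  simp only [WGraph.chi, WGraph.genus, PGraph.numLegs, PGraph.numVertices]
  linarith

namespace HarmonicHom

variable {G' G : PGraph} (φ : HarmonicHom G' G)

lemma isVertex_map {v' : G'.X} (hv' : G'.IsVertex v') : G.IsVertex (φ.toFun v') := by
  rw [PGraph.IsVertex, ← φ.map_rt, hv']

lemma sum_deg_mul_comp {M : Type*} [NonAssocSemiring M] (f : G.X → M) :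
    ∑ v' ∈ G'.vertexSet, (φ.deg v' : M) * f (φ.toFun v') =
      ∑ v ∈ G.vertexSet, (φ.vertexFiberDeg v : M) * f v := by
  classical
  rw [← sum_fiberwise_of_maps_to
    (fun v' hv' => G.mem_vertexSet.mpr (φ.isVertex_map (G'.mem_vertexSet.mp hv')))]
  refine sum_congr rfl fun v _ => ?_
  rw [vertexFiberDeg, cfilter_eq_filter, Nat.cast_sum, sum_mul]
  exact sum_congr rfl fun v' hv' => by rw [(mem_filter.mp hv').2]

end HarmonicHom

lemma sum_ram_eq {G' G : WGraph} (φ : HarmonicHom G'.toPGraph G.toPGraph) :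
    ∑ v' ∈ G'.vertexSet, ram φ v' =
      ∑ v ∈ G.vertexSet, (φ.vertexFiberDeg v : ℤ) * G.chiV v - G'.chi := by
  rw [G'.chi_eq_sum_chiV, ← φ.sum_deg_mul_comp, ← sum_sub_distrib]
  rfl

theorem global_riemann_hurwitz_general
    (G' G : WGraph)
    (φ : HarmonicHom G'.toPGraph G.toPGraph)
    (D : ℕ) (hD : ∀ v, G.toPGraph.IsVertex v → φ.vertexFiberDeg v = D) :
    G'.chi = (D : ℤ) * G.chi - ∑ v' ∈ G'.toPGraph.vertexSet, ram φ v' ∧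
    (Unramified φ → G'.chi = (D : ℤ) * G.chi) := by
  have hfibres : ∑ v ∈ G.vertexSet, (φ.vertexFiberDeg v : ℤ) * G.chiV v = D * G.chi := by
    rw [G.chi_eq_sum_chiV, mul_sum]
    exact sum_congr rfl fun v hv => by rw [hD v (G.mem_vertexSet.mp hv)]
  have hram : ∑ v' ∈ G'.vertexSet, ram φ v' = D * G.chi - G'.chi := by
    rw [sum_ram_eq, hfibres]
  refine ⟨by omega, fun hunr => ?_⟩
  have hzero : ∑ v' ∈ G'.vertexSet, ram φ v' = 0 :=
    sum_eq_zero fun v' hv' => hunr v' (G'.mem_vertexSet.mp hv')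
  omega

/-- **global Riemann–Hurwitz formula.** Let `φ : (G',g') → (G,g)` be a finite
harmonic morphism of connected weighted graphs, of degree `D` (i.e. the vertex fiber
sums of the degree function all equal `D`).  Then
`χ(G') = deg(φ)·χ(G) − Ram(φ)` where `Ram(φ) = Σ_{v' ∈ V(G')} Ram_φ(v')`.
In particular, if `φ` is unramified then `χ(G') = deg(φ)·χ(G)`. -/
theorem global_riemann_hurwitz
    (G' G : WGraph) (hG' : G'.toPGraph.Connected) (hG : G.toPGraph.Connected)
    (φ : HarmonicHom G'.toPGraph G.toPGraph) (hfin : φ.Finite)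
    (D : ℕ) (hD : ∀ v, G.toPGraph.IsVertex v → φ.vertexFiberDeg v = D) :
    G'.chi = (D : ℤ) * G.chi - ∑ v' ∈ G'.toPGraph.vertexSet, ram φ v' ∧
    (Unramified φ → G'.chi = (D : ℤ) * G.chi) :=
  global_riemann_hurwitz_general G' G φ D hD

end TropDR
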